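/- No ≥1-subdivision of K₄ (the complete graph on four vertices) is a restricted frame graph; that is, no graph obtained from K₄ by subdividing every edge at least once is a restricted frame graph. -/

import Mathlib

/-! ## Frames and restricted frame graphs -/

/-- An axis-parallel box in `ℝ²`, i.e. a product `[x1,x2] × [y1,y2]` of two closed
nondegenerate intervals. -/
structure Box : Type where
  x1 : ℝ
  x2 : ℝ
  y1 : ℝ
  y2 : ℝ
  hx : x1 < x2
  hy : y1 < y2

namespace Box

/-- The region bounded by the frame of a box: the closed box itself. -/
def region (B : Box) : Set (ℝ × ℝ) :=
  {p : ℝ × ℝ | B.x1 ≤ p.1 ∧ p.1 ≤ B.x2 ∧ B.y1 ≤ p.2 ∧ p.2 ≤ B.y2}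

/-- The frame of a box: the topological boundary of the closed box. -/
def frame (B : Box) : Set (ℝ × ℝ) :=
  {p : ℝ × ℝ | p ∈ B.region ∧ (p.1 = B.x1 ∨ p.1 = B.x2 ∨ p.2 = B.y1 ∨ p.2 = B.y2)}

/-- The left side `{x1} × [y1,y2]` of a frame. -/
def leftSide (B : Box) : Set (ℝ × ℝ) :=
  {p : ℝ × ℝ | p.1 = B.x1 ∧ B.y1 ≤ p.2 ∧ p.2 ≤ B.y2}

/-- The right side `{x2} × [y1,y2]` of a frame. -/
def rightSide (B : Box) : Set (ℝ × ℝ) :=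
  {p : ℝ × ℝ | p.1 = B.x2 ∧ B.y1 ≤ p.2 ∧ p.2 ≤ B.y2}

/-- The top side `[x1,x2] × {y2}` of a frame. -/
def topSide (B : Box) : Set (ℝ × ℝ) :=
  {p : ℝ × ℝ | p.2 = B.y2 ∧ B.x1 ≤ p.1 ∧ p.1 ≤ B.x2}

/-- The bottom side `[x1,x2] × {y1}` of a frame. -/
def bottomSide (B : Box) : Set (ℝ × ℝ) :=
  {p : ℝ × ℝ | p.2 = B.y1 ∧ B.x1 ≤ p.1 ∧ p.1 ≤ B.x2}

/-- The four corners of a frame. -/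
def corners (B : Box) : Set (ℝ × ℝ) :=
  {(B.x1, B.y1), (B.x1, B.y2), (B.x2, B.y1), (B.x2, B.y2)}

/-- `Box.Inside inner outer` : the frame of `outer` contains the frame of `inner`,
i.e. the two frames are disjoint and the frame of `inner` is contained in the region
bounded by the frame of `outer`. -/
def Inside (inner outer : Box) : Prop :=
  inner.frame ∩ outer.frame = ∅ ∧ inner.frame ⊆ outer.region

/-- `Box.Outside B outer` : the frames are disjoint and `B` is not inside `outer`. -/
def Outside (B outer : Box) : Prop :=
  B.frame ∩ outer.frame = ∅ ∧ ¬ Inside B outer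

end Box

/-- A family of frames `(F v)` is a representation of the graph `G` as a restricted
frame graph: distinct vertices are adjacent iff their frames intersect, and the four
restrictions on the representation hold. -/
structure IsFrameRepresentation {V : Type} (G : SimpleGraph V) (F : V → Box) : Prop where
  /-- Distinct vertices are adjacent iff their frames intersect. -/
  adj_iff : ∀ u v : V, u ≠ v → (G.Adj u v ↔ ((F u).frame ∩ (F v).frame).Nonempty)
  /-- (1) Corners of a frame do not coincide with any point of another frame. -/
  corner_free : ∀ u v : V, u ≠ v → (F u).corners ∩ (F v).frame = ∅
  /-- (2) The left side of a frame does not intersect any other frame. -/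
  left_free : ∀ u v : V, u ≠ v → (F u).leftSide ∩ (F v).frame = ∅
  /-- (3) If the right side of a frame intersects a second frame, this right side
  intersects both the top and the bottom side of that second frame. -/
  right_cross : ∀ u v : V, u ≠ v →
    ((F u).rightSide ∩ (F v).frame).Nonempty →
    ((F u).rightSide ∩ (F v).topSide).Nonempty ∧
      ((F u).rightSide ∩ (F v).bottomSide).Nonempty
  /-- (4) If two frames intersect, no third frame is entirely contained in the
  intersection of the regions bounded by the two frames. -/
  not_nested : ∀ u v w : V, u ≠ v → w ≠ u → w ≠ v →
    ((F u).frame ∩ (F v).frame).Nonempty →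
    ¬ ((F w).frame ⊆ (F u).region ∩ (F v).region)

/-- A graph is a restricted frame graph if it admits a frame representation. -/
def IsRestrictedFrameGraph {V : Type} (G : SimpleGraph V) : Prop :=
  ∃ F : V → Box, IsFrameRepresentation G F

/-! ## Basic graph notions -/

/-- The closed neighborhood `N[u] = {u} ∪ N(u)`. -/
def closedNbhd {V : Type} (G : SimpleGraph V) (u : V) : Set V :=
  insert u (G.neighborSet u)

/-- `G` has a full star-cutset: for some vertex `u` the removal of `N[u]`
disconnects `G`. -/
def HasFullStarCutset {V : Type} (G : SimpleGraph V) : Prop :=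
  ∃ u : V, ¬ (G.induce ((closedNbhd G u)ᶜ)).Preconnected

/-- `v` is a cut-vertex of `G`: its removal disconnects `G`. -/
def IsCutVertex {V : Type} (G : SimpleGraph V) (v : V) : Prop :=
  ¬ (G.induce {u : V | u ≠ v}).Preconnected

/-- `G` is a path graph: its vertices can be enumerated `0, …, n-1` so that two
vertices are adjacent iff they are consecutive. -/
def IsPathGraph {V : Type} (G : SimpleGraph V) : Prop :=
  ∃ (n : ℕ) (e : V ≃ Fin n), ∀ u v : V,
    G.Adj u v ↔ ((e u : ℕ) + 1 = (e v : ℕ) ∨ (e v : ℕ) + 1 = (e u : ℕ))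

/-- `G` is a cycle graph (on at least 3 vertices). -/
def IsCycleGraphOn {V : Type} (G : SimpleGraph V) : Prop :=
  ∃ n : ℕ, 3 ≤ n ∧ ∃ e : V ≃ Fin n, ∀ u v : V,
    G.Adj u v ↔ (((e u : ℕ) + 1) % n = (e v : ℕ) ∨ ((e v : ℕ) + 1) % n = (e u : ℕ))

/-- `x` is a leaf of `T`: it has exactly one neighbor. -/
def IsLeaf {V : Type} (T : SimpleGraph V) (x : V) : Prop :=
  (T.neighborSet x).ncard = 1

/-- `G` is a chandelier with pivot `v`: `G - v` is a tree `T` and `v` is adjacent to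
exactly the leaves of `T`. -/
def IsChandelierWithPivot {V : Type} (G : SimpleGraph V) (v : V) : Prop :=
  (G.induce {u : V | u ≠ v}).IsTree ∧
    ∀ u : ↥{u : V | u ≠ v}, (G.Adj v u.val ↔ IsLeaf (G.induce {u : V | u ≠ v}) u)

/-- `G` is a chandelier. -/
def IsChandelier {V : Type} (G : SimpleGraph V) : Prop :=
  ∃ v : V, IsChandelierWithPivot G v

/-- `G` is a luxury chandelier: a chandelier (with pivot `v` and tree `T = G - v`)
such that the neighbor in `T` of each leaf of `T` has degree 2 in `T`. -/
def IsLuxuryChandelier {V : Type} (G : SimpleGraph V) : Prop :=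
  ∃ v : V, IsChandelierWithPivot G v ∧
    ∀ x y : ↥{u : V | u ≠ v}, (G.induce {u : V | u ≠ v}).Adj x y →
      IsLeaf (G.induce {u : V | u ≠ v}) x →
      ((G.induce {u : V | u ≠ v}).neighborSet y).ncard = 2

/-! ## Multigraphs and subdivisions -/

/-- A loopless multigraph on vertex set `V`: a symmetric multiplicity function. -/
structure Multigraph (V : Type) where
  m : V → V → ℕ
  symm : ∀ u v : V, m u v = m v u
  loopless : ∀ v : V, m v v = 0

/-- The multigraph associated with a simple graph (each edge has multiplicity 1). -/
noncomputable def SimpleGraph.toMultigraph {V : Type} (G : SimpleGraph V) : Multigraph V where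
  m u v := @ite ℕ (G.Adj u v) (Classical.dec _) 1 0
  symm u v := by
    beta_reduce
    by_cases h : G.Adj u v
    · rw [if_pos h, if_pos (G.adj_symm h)]
    · rw [if_neg h, if_neg (fun h' => h (G.adj_symm h'))]
  loopless v := by
    beta_reduce
    rw [if_neg (G.loopless.irrefl v)]

/-- The interior (set of internal vertices) of a walk. -/
def walkInterior {V : Type} {G : SimpleGraph V} {a b : V} (p : G.Walk a b) : Set V :=
  {w : V | w ∈ p.support ∧ w ≠ a ∧ w ≠ b}

/-- A witness that the simple graph `H` is a `≥k`-subdivision of the multigraph `G`: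
each edge of `G` (counted with multiplicity) is replaced by a path with at least
`k+1` edges between (the images of) its endpoints, these paths being internally
disjoint from each other and from the branch vertices, and covering all of `H`. -/
structure MultiSubdivision {V W : Type} (G : Multigraph V) (H : SimpleGraph W) (k : ℕ) where
  /-- the embedding of branch vertices -/
  f : V ↪ W
  /-- the path replacing the `i`-th parallel edge between `u` and `v` -/
  path : ∀ u v : V, Fin (G.m u v) → H.Walk (f u) (f v)
  path_symm : ∀ (u v : V) (i : Fin (G.m u v)),
    path v u (Fin.cast (G.symm u v) i) = (path u v i).reverse
  path_ne : ∀ (u v : V) (i i' : Fin (G.m u v)), (i : ℕ) ≠ (i' : ℕ) →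
    path u v i ≠ path u v i'
  isPath : ∀ (u v : V) (i : Fin (G.m u v)), (path u v i).IsPath
  length_le : ∀ (u v : V) (i : Fin (G.m u v)), k + 1 ≤ (path u v i).length
  /-- the paths are internally disjoint from the branch vertices -/
  interior_avoid : ∀ (u v : V) (i : Fin (G.m u v)) (x : V),
    f x ∉ walkInterior (path u v i)
  /-- distinct paths are pairwise internally disjoint -/
  interior_disjoint : ∀ (u v : V) (i : Fin (G.m u v)) (u' v' : V) (i' : Fin (G.m u' v')),
    (walkInterior (path u v i) ∩ walkInterior (path u' v' i')).Nonempty →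
    (u = u' ∧ v = v' ∧ (i : ℕ) = (i' : ℕ)) ∨ (u = v' ∧ v = u' ∧ (i : ℕ) = (i' : ℕ))
  /-- every vertex of `H` is a branch vertex or an internal vertex of a path -/
  vertex_cover : ∀ w : W, (∃ x : V, f x = w) ∨
    ∃ (u v : V) (i : Fin (G.m u v)), w ∈ walkInterior (path u v i)
  /-- every edge of `H` lies on one of the paths -/
  edge_cover : ∀ e ∈ H.edgeSet, ∃ (u v : V) (i : Fin (G.m u v)), e ∈ (path u v i).edges

/-- `H` is a `≥k`-subdivision of the multigraph `G`. -/
def IsSubdivisionGE {V W : Type} (G : Multigraph V) (k : ℕ) (H : SimpleGraph W) : Prop :=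
  Nonempty (MultiSubdivision G H k)

/-- `H` is a subdivision of the simple graph `G` (every edge is replaced by a path
with at least one edge). -/
def IsSubdivision {V W : Type} (G : SimpleGraph V) (H : SimpleGraph W) : Prop :=
  IsSubdivisionGE G.toMultigraph 0 H

namespace Multigraph

/-- The underlying simple graph of a multigraph. -/
def support {V : Type} (G : Multigraph V) : SimpleGraph V where
  Adj u v := 0 < G.m u v
  symm := by
    constructor
    intro u v h
    rw [G.symm v u]
    exact h
  loopless := by
    constructor
    intro v h
    rw [G.loopless v] at h
    exact Nat.lt_irrefl 0 h

/-- A multigraph is connected if its underlying simple graph is. -/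
def Connected {V : Type} (G : Multigraph V) : Prop :=
  G.support.Connected

/-- A multigraph is 2-connected if it is connected, has at least two vertices, and
deleting any single vertex leaves it connected. -/
def TwoConnected {V : Type} (G : Multigraph V) : Prop :=
  G.support.Connected ∧ (∃ u v : V, u ≠ v) ∧
    ∀ v : V, (G.support.induce {u : V | u ≠ v}).Connected

/-- `v` is a feedback vertex of the multigraph `G`: `G - v` contains no cycle
(where a pair of parallel edges forms a cycle of length 2). -/
def IsFeedbackVertex {V : Type} (G : Multigraph V) (v : V) : Prop :=
  (G.support.induce {u : V | u ≠ v}).IsAcyclic ∧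
    ∀ u w : V, u ≠ v → w ≠ v → G.m u w ≤ 1

end Multigraph

/-! ## Induced cycles and big vertices -/

/-- `C` induces a cycle in `G`. -/
def IsInducedCycle {V : Type} (G : SimpleGraph V) (C : Set V) : Prop :=
  IsCycleGraphOn (G.induce C)

/-- `v` is a big vertex of the (induced cycle on) `C` with respect to the frame
representation `F`: `v ∈ C` and `F v` contains the frame of every vertex of `C`
outside `N[v]`. -/
def IsBigVertexOf {V : Type} (G : SimpleGraph V) (F : V → Box) (C : Set V) (v : V) : Prop :=
  v ∈ C ∧ ∀ u ∈ C, u ≠ v → ¬ G.Adj v u → Box.Inside (F u) (F v)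

/-- `v` is a big vertex of the representation `F`: it is a big vertex of some
induced cycle of `G`. -/
def IsBigVertex {V : Type} (G : SimpleGraph V) (F : V → Box) (v : V) : Prop :=
  ∃ C : Set V, IsInducedCycle G C ∧ IsBigVertexOf G F C v

/-! ## Gluing a chandelier onto a vertex -/

/-- The graph obtained from the disjoint union of `G₁` and `G₂` by identifying the
vertex `v` of `G₁` with the vertex `p` of `G₂`. -/
def glueAt {V₁ V₂ : Type} (G₁ : SimpleGraph V₁) (G₂ : SimpleGraph V₂) (v : V₁) (p : V₂) :
    SimpleGraph (V₁ ⊕ {x : V₂ // x ≠ p}) :=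
  SimpleGraph.fromRel (fun a b =>
    match a, b with
    | Sum.inl u, Sum.inl w => G₁.Adj u w
    | Sum.inr u, Sum.inr w => G₂.Adj u.val w.val
    | Sum.inl u, Sum.inr w => u = v ∧ G₂.Adj p w.val
    | Sum.inr _, Sum.inl _ => False)

/-! ## The multigraphs `Ĥ₁` and `Ĥ₂` -/

/-- The multiplicity matrix of `Ĥ₁` (vertices `a₁ = 0`, `b₁ = 1`, `v₁ = 2`, `v₂ = 3`,
`a₂ = 4`, `b₂ = 5`). -/
def H1hatMatrix : Matrix (Fin 6) (Fin 6) ℕ :=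
  !![0, 2, 1, 0, 0, 0;
     2, 0, 1, 0, 0, 0;
     1, 1, 0, 1, 0, 0;
     0, 0, 1, 0, 1, 1;
     0, 0, 0, 1, 0, 2;
     0, 0, 0, 1, 2, 0]

/-- The multigraph `Ĥ₁`: two disjoint digons `a₁b₁`, `a₂b₂`, and single edges
`a₁v₁`, `b₁v₁`, `v₁v₂`, `a₂v₂`, `b₂v₂`. -/
def H1hat : Multigraph (Fin 6) where
  m u v := H1hatMatrix u v
  symm := by intro u v; fin_cases u <;> fin_cases v <;> rfl
  loopless := by intro v; fin_cases v <;> rfl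

/-- The multiplicity matrix of `Ĥ₂` (vertices `a₁ = 0`, `b₁ = 1`, `v = 2`,
`a₂ = 3`, `b₂ = 4`). -/
def H2hatMatrix : Matrix (Fin 5) (Fin 5) ℕ :=
  !![0, 2, 1, 0, 0;
     2, 0, 1, 0, 0;
     1, 1, 0, 1, 1;
     0, 0, 1, 0, 2;
     0, 0, 1, 2, 0]

/-- The multigraph `Ĥ₂`: two digons `a₁b₁`, `a₂b₂`, and single edges
`a₁v`, `b₁v`, `a₂v`, `b₂v`. -/
def H2hat : Multigraph (Fin 5) where
  m u v := H2hatMatrix u v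
  symm := by intro u v; fin_cases u <;> fin_cases v <;> rfl
  loopless := by intro v; fin_cases v <;> rfl

/-! ## Subdivisions of `K₄` and their type -/

/-- The complete graph on four vertices. -/
def K4 : SimpleGraph (Fin 4) := ⊤

/-- The set of edges of `K₄` that are subdivided at least once in the subdivision
witnessed by `S` (i.e. replaced by a path with at least two edges). -/
def subdividedEdges {W : Type} {H : SimpleGraph W}
    (S : MultiSubdivision K4.toMultigraph H 0) : Set (Sym2 (Fin 4)) :=
  {e : Sym2 (Fin 4) | ∃ (u v : Fin 4) (i : Fin (K4.toMultigraph.m u v)),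
    e = s(u, v) ∧ 2 ≤ (S.path u v i).length}

/-! ## Adding a twin -/

/-- The graph obtained from `G` by adding a twin of `v`: a new vertex, non-adjacent
to `v`, whose neighborhood is exactly `N(v)`. -/
def addTwin {V : Type} (G : SimpleGraph V) (v : V) : SimpleGraph (V ⊕ Unit) :=
  SimpleGraph.fromRel (fun a b =>
    match a, b with
    | Sum.inl u, Sum.inl w => G.Adj u w
    | Sum.inr _, Sum.inl u => G.Adj v u
    | _, _ => False)

/-! ## The construction of Burling and Pawlik et al. -/

/-- A graph-stable set pair: a graph together with a collection of sets of vertices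
(intended: stable sets). -/
structure GSPair : Type 1 where
  V : Type
  G : SimpleGraph V
  S : Set (Set V)

namespace GSPair

/-- The vertex type of `next P`: the original vertices, the vertices `(s, u)` of the
copy `H_s` of the graph for each `s ∈ 𝒮`, and the new vertices `v_{s,t}`. -/
abbrev nextVertex (P : GSPair) : Type :=
  P.V ⊕ ((↥P.S × P.V) ⊕ (↥P.S × ↥P.S))

/-- The adjacency generator for the graph of `next P`. -/
def nextRel (P : GSPair) : P.nextVertex → P.nextVertex → Prop
  | Sum.inl u, Sum.inl v => P.G.Adj u v
  | Sum.inr (Sum.inl (s, u)), Sum.inr (Sum.inl (t, v)) => s = t ∧ P.G.Adj u v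
  | Sum.inr (Sum.inr (s, t)), Sum.inr (Sum.inl (s', v)) => s = s' ∧ v ∈ (t : Set P.V)
  | _, _ => False

/-- The procedure `next`: add a disjoint copy `H_s` of the graph for each `s ∈ 𝒮`, a
vertex `v_{s,t}` whose neighborhood is exactly the copy of `t` inside `H_s` for all
`s, t ∈ 𝒮`, and take as new collection of stable sets all `s ∪ t_s` and
`s ∪ {v_{s,t}}`. -/
def next (P : GSPair) : GSPair where
  V := P.nextVertex
  G := SimpleGraph.fromRel P.nextRel
  S := {A : Set P.nextVertex | ∃ s t : ↥P.S,
    A = (Sum.inl '' (s : Set P.V) : Set P.nextVertex) ∪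
        ((fun u : P.V => (Sum.inr (Sum.inl (s, u)) : P.nextVertex)) '' (t : Set P.V)) ∨
    A = (Sum.inl '' (s : Set P.V) : Set P.nextVertex) ∪ {Sum.inr (Sum.inr (s, t))}}

/-- The starting pair: a single vertex, with the single stable set consisting of
that vertex. -/
def base : GSPair := ⟨PUnit, ⊥, {Set.univ}⟩

/-- `P` is an induced subgraph-stable set pair of `Q`. -/
def IsInducedSubpair (P Q : GSPair) : Prop :=
  ∃ f : P.V ↪ Q.V, (∀ u v : P.V, P.G.Adj u v ↔ Q.G.Adj (f u) (f v)) ∧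
    ∀ A ∈ P.S, ∃ B ∈ Q.S, A = f ⁻¹' B

/-- A graph-stable set pair is constructible if it is an induced subgraph-stable set
pair of some iterate of `next` on the starting pair. -/
def Constructible (P : GSPair) : Prop :=
  ∃ i : ℕ, IsInducedSubpair P (next^[i] base)

end GSPair

/-!
In a restricted frame representation the frames of adjacent vertices cross (the right side of one
runs vertically through the other), and disjoint frames whose boxes overlap are nested. Suppose the
frame of `q` contains the frame of a non-neighbour. Nesting inside the frame of `q` propagates
along edges avoiding `N[q]`, and a `≥1`-subdivision of `K₄` has no full star-cutset, so the frame
of `q` contains the frames of all vertices outside `N[q]`; hence two such vertices are equal or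
adjacent.

On each of the four subdivided triangles of `K₄`, the two neighbours of the vertex whose frame has
the rightmost left side both cross its frame, so their frames are nested and one of them contains
the frame of a non-neighbour. Every vertex and every edge of the subdivision misses one of the four
triangles, so this produces three pairwise adjacent vertices, whereas the subdivision is
triangle-free.
-/

namespace Box

variable {A B C : Box} {p : ℝ × ℝ}

/-- `A.Crosses B`: the right side of `A` runs vertically through `B`, from below its bottom
side to above its top side, while the left side of `A` stays to the left of `B`. -/
def Crosses (A B : Box) : Prop :=
  A.x1 < B.x1 ∧ B.x1 < A.x2 ∧ A.x2 < B.x2 ∧ A.y1 < B.y1 ∧ B.y2 < A.y2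

def NestedIn (A B : Box) : Prop :=
  B.x1 < A.x1 ∧ A.x2 < B.x2 ∧ B.y1 < A.y1 ∧ A.y2 < B.y2

lemma mk_mem_frame_of_fst (B : Box) {x y : ℝ} (hx : x = B.x1 ∨ x = B.x2)
    (hy1 : B.y1 ≤ y) (hy2 : y ≤ B.y2) : (x, y) ∈ B.frame := by
  rcases hx with rfl | rfl
  · exact ⟨⟨le_rfl, B.hx.le, hy1, hy2⟩, Or.inl rfl⟩
  · exact ⟨⟨B.hx.le, le_rfl, hy1, hy2⟩, Or.inr (Or.inl rfl)⟩

lemma mk_mem_frame_of_snd (B : Box) {x y : ℝ} (hy : y = B.y1 ∨ y = B.y2)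
    (hx1 : B.x1 ≤ x) (hx2 : x ≤ B.x2) : (x, y) ∈ B.frame := by
  rcases hy with rfl | rfl
  · exact ⟨⟨hx1, hx2, le_rfl, B.hy.le⟩, Or.inr (Or.inr (Or.inl rfl))⟩
  · exact ⟨⟨hx1, hx2, B.hy.le, le_rfl⟩, Or.inr (Or.inr (Or.inr rfl))⟩

lemma mk_mem_corners (B : Box) {x y : ℝ} (hx : x = B.x1 ∨ x = B.x2)
    (hy : y = B.y1 ∨ y = B.y2) : (x, y) ∈ B.corners := by
  rcases hx with rfl | rfl <;> rcases hy with rfl | rfl <;> simp [corners]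

lemma x1_y1_mem_region (B : Box) : (B.x1, B.y1) ∈ B.region :=
  ⟨le_rfl, B.hx.le, le_rfl, B.hy.le⟩

lemma Crosses.x1_y1_mem_region (h : A.Crosses B) : (B.x1, B.y1) ∈ A.region := by
  obtain ⟨h1, h2, -, h4, h5⟩ := h
  exact ⟨h1.le, h2.le, h4.le, by linarith [B.hy]⟩

lemma NestedIn.mem_region (h : A.NestedIn B) (hp : p ∈ A.region) : p ∈ B.region := by
  obtain ⟨h1, h2, h3, h4⟩ := h
  obtain ⟨k1, k2, k3, k4⟩ := hp
  exact ⟨by linarith, by linarith, by linarith, by linarith⟩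

lemma NestedIn.asymm (h : A.NestedIn B) : ¬ B.NestedIn A := fun h' => by
  linarith [h.1, h'.1]

lemma nestedIn_of_disjoint_of_x1_le (h : Disjoint A.frame B.frame) (hpA : p ∈ A.region)
    (hpB : p ∈ B.region) (hx : B.x1 ≤ A.x1) : A.NestedIn B := by
  obtain ⟨a1, a2, a3, a4⟩ := hpA
  obtain ⟨b1, b2, b3, b4⟩ := hpB
  have hy1 : B.y1 < A.y1 := by
    by_contra! hy
    exact Set.disjoint_left.1 h (A.mk_mem_frame_of_fst (Or.inl rfl) hy (by linarith))
      (B.mk_mem_frame_of_snd (Or.inl rfl) hx (by linarith))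
  have hx1 : B.x1 < A.x1 := by
    refine lt_of_le_of_ne hx fun hx => Set.disjoint_left.1 h
      (A.mk_mem_frame_of_fst (Or.inl rfl) le_rfl A.hy.le) ?_
    exact B.mk_mem_frame_of_fst (Or.inl hx.symm) hy1.le (by linarith)
  have hx2 : A.x2 < B.x2 := by
    by_contra! hx2
    exact Set.disjoint_left.1 h (A.mk_mem_frame_of_snd (Or.inl rfl) (by linarith) hx2)
      (B.mk_mem_frame_of_fst (Or.inr rfl) hy1.le (by linarith))
  have hy2 : A.y2 < B.y2 := by
    by_contra! hy2
    exact Set.disjoint_left.1 h (A.mk_mem_frame_of_fst (Or.inl rfl) (by linarith) hy2)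
      (B.mk_mem_frame_of_snd (Or.inr rfl) hx (by linarith))
  exact ⟨hx1, hx2, hy1, hy2⟩

lemma nestedIn_or_nestedIn_of_disjoint (h : Disjoint A.frame B.frame) (hpA : p ∈ A.region)
    (hpB : p ∈ B.region) : A.NestedIn B ∨ B.NestedIn A :=
  (le_total B.x1 A.x1).imp (nestedIn_of_disjoint_of_x1_le h hpA hpB)
    (nestedIn_of_disjoint_of_x1_le h.symm hpB hpA)

lemma nestedIn_or_nestedIn_of_crosses (hA : A.Crosses C) (hB : B.Crosses C)
    (h : Disjoint A.frame B.frame) : A.NestedIn B ∨ B.NestedIn A :=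
  nestedIn_or_nestedIn_of_disjoint h hA.x1_y1_mem_region hB.x1_y1_mem_region

lemma NestedIn.of_crosses (hBC : B.NestedIn C) (hAB : A.Crosses B ∨ B.Crosses A)
    (h : Disjoint A.frame C.frame) : A.NestedIn C := by
  obtain ⟨p, hpA, hpB⟩ : (A.region ∩ B.region).Nonempty := by
    rcases hAB with hAB | hBA
    · exact ⟨_, hAB.x1_y1_mem_region, B.x1_y1_mem_region⟩
    · exact ⟨_, A.x1_y1_mem_region, hBA.x1_y1_mem_region⟩
  refine (nestedIn_or_nestedIn_of_disjoint h hpA (hBC.mem_region hpB)).resolve_right ?_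
  obtain ⟨c1, c2, c3, c4⟩ := hBC
  rintro ⟨d1, d2, d3, d4⟩
  rcases hAB with ⟨e1, e2, e3, e4, e5⟩ | ⟨e1, e2, e3, e4, e5⟩ <;> linarith

end Box

lemma mem_closedNbhd {V : Type} {G : SimpleGraph V} {u x : V} :
    x ∈ closedNbhd G u ↔ x = u ∨ G.Adj u x :=
  Iff.rfl

def EnclosesNonNeighbor {W : Type} (H : SimpleGraph W) (F : W → Box) (q : W) : Prop :=
  ∃ p ∉ closedNbhd H q, (F p).NestedIn (F q)

namespace IsFrameRepresentation

variable {W : Type} {H : SimpleGraph W} {F : W → Box} {u v : W}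

lemma notMem_frame_of_mem_corners (rep : IsFrameRepresentation H F) (huv : u ≠ v)
    {p : ℝ × ℝ} (hp : p ∈ (F u).corners) : p ∉ (F v).frame := fun hp' =>
  (Set.eq_empty_iff_forall_notMem.1 (rep.corner_free u v huv) p) ⟨hp, hp'⟩

lemma notMem_frame_of_mem_leftSide (rep : IsFrameRepresentation H F) (huv : u ≠ v)
    {p : ℝ × ℝ} (hp : p ∈ (F u).leftSide) : p ∉ (F v).frame := fun hp' =>
  (Set.eq_empty_iff_forall_notMem.1 (rep.left_free u v huv) p) ⟨hp, hp'⟩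

lemma crosses_of_rightSide (rep : IsFrameRepresentation H F) (huv : u ≠ v)
    (h : ((F u).rightSide ∩ (F v).frame).Nonempty) : (F u).Crosses (F v) := by
  obtain ⟨⟨q, ⟨hq1, hq2, hq3⟩, hq4, hq5, hq6⟩, ⟨r, ⟨-, hr2, -⟩, hr4, -, -⟩⟩ :=
    rep.right_cross u v huv h
  rw [hq1] at hq5 hq6
  rw [hq4] at hq2 hq3
  rw [hr4] at hr2
  have hcAB : ∀ p, p ∈ (F u).corners → p ∉ (F v).frame := fun _ =>
    rep.notMem_frame_of_mem_corners huv
  have hcBA : ∀ p, p ∈ (F v).corners → p ∉ (F u).frame := fun _ =>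
    rep.notMem_frame_of_mem_corners huv.symm
  have hy2 : (F v).y2 < (F u).y2 := lt_of_le_of_ne hq3 fun hy =>
    hcAB _ ((F u).mk_mem_corners (Or.inr rfl) (Or.inr rfl))
      ((F v).mk_mem_frame_of_snd (Or.inr hy.symm) hq5 hq6)
  have hy1 : (F u).y1 < (F v).y1 := lt_of_le_of_ne hr2 fun hy =>
    hcAB _ ((F u).mk_mem_corners (Or.inr rfl) (Or.inl rfl))
      ((F v).mk_mem_frame_of_snd (Or.inl hy) hq5 hq6)
  have hx1 : (F v).x1 < (F u).x2 := lt_of_le_of_ne hq5 fun hx =>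
    hcBA _ ((F v).mk_mem_corners (Or.inl rfl) (Or.inr rfl))
      ((F u).mk_mem_frame_of_fst (Or.inr hx) hq2 hq3)
  have hx2 : (F u).x2 < (F v).x2 := lt_of_le_of_ne hq6 fun hx =>
    hcBA _ ((F v).mk_mem_corners (Or.inr rfl) (Or.inr rfl))
      ((F u).mk_mem_frame_of_fst (Or.inr hx.symm) hq2 hq3)
  have hx0 : (F u).x1 < (F v).x1 := by
    by_contra! hx
    exact rep.notMem_frame_of_mem_leftSide huv ⟨rfl, hq2, hq3⟩
      ((F v).mk_mem_frame_of_snd (Or.inr rfl) hx (by linarith [(F u).hx]))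
  exact ⟨hx0, hx1, hx2, hy1, hy2⟩

lemma crosses_or_crosses_of_adj (rep : IsFrameRepresentation H F) (h : H.Adj u v) :
    (F u).Crosses (F v) ∨ (F v).Crosses (F u) := by
  obtain ⟨p, hpA, hpB⟩ := (rep.adj_iff u v h.ne).1 h
  obtain ⟨⟨a1, a2, a3, a4⟩, hsA⟩ := id hpA
  obtain ⟨⟨b1, b2, b3, b4⟩, hsB⟩ := id hpB
  rcases hsA with hx | hx | hA
  · exact absurd hpB (rep.notMem_frame_of_mem_leftSide h.ne ⟨hx, a3, a4⟩)
  · exact Or.inl (rep.crosses_of_rightSide h.ne ⟨p, ⟨hx, a3, a4⟩, hpB⟩)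
  rcases hsB with hx | hx | hB
  · exact absurd hpA (rep.notMem_frame_of_mem_leftSide h.ne.symm ⟨hx, b3, b4⟩)
  · exact Or.inr (rep.crosses_of_rightSide h.ne.symm ⟨p, ⟨hx, b3, b4⟩, hpA⟩)
  -- `p` lies on a horizontal side of both frames, so a corner of one of them lies on the other
  exfalso
  rcases le_total (F v).x1 (F u).x1 with hx | hx
  · exact rep.notMem_frame_of_mem_corners h.ne ((F u).mk_mem_corners (Or.inl rfl) hA)
      ((F v).mk_mem_frame_of_snd hB hx (by linarith))
  · exact rep.notMem_frame_of_mem_corners h.ne.symm ((F v).mk_mem_corners (Or.inl rfl) hB)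
      ((F u).mk_mem_frame_of_snd hA hx (by linarith))

lemma disjoint_frame_of_not_adj (rep : IsFrameRepresentation H F) (huv : u ≠ v)
    (h : ¬ H.Adj u v) : Disjoint (F u).frame (F v).frame :=
  Set.disjoint_iff_inter_eq_empty.2 (Set.not_nonempty_iff_eq_empty.1 (mt (rep.adj_iff u v huv).2 h))

lemma crosses_of_adj_of_x1_le (rep : IsFrameRepresentation H F) (h : H.Adj u v)
    (hx : (F u).x1 ≤ (F v).x1) : (F u).Crosses (F v) :=
  (rep.crosses_or_crosses_of_adj h).resolve_right fun h' => by linarith [h'.1]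

lemma nestedIn_of_reachable (rep : IsFrameRepresentation H F) {m : W}
    {a b : ↥(closedNbhd H m)ᶜ} (hab : (H.induce (closedNbhd H m)ᶜ).Reachable a b)
    (ha : (F a).NestedIn (F m)) : (F b).NestedIn (F m) := by
  obtain ⟨p⟩ := hab
  induction p with
  | nil => exact ha
  | @cons a c b hac _ ih =>
    have hc : c.1 ∉ closedNbhd H m := c.2
    rw [mem_closedNbhd, not_or] at hc
    exact ih (ha.of_crosses (rep.crosses_or_crosses_of_adj (SimpleGraph.induce_adj.1 hac)).symm
      (rep.disjoint_frame_of_not_adj hc.1 fun h => hc.2 h.symm))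

lemma nestedIn_of_enclosesNonNeighbor (rep : IsFrameRepresentation H F)
    (hH : ¬ HasFullStarCutset H) {q w : W} (hq : EnclosesNonNeighbor H F q)
    (hw : w ∉ closedNbhd H q) : (F w).NestedIn (F q) := by
  obtain ⟨p, hp, hpq⟩ := hq
  have hconn : (H.induce (closedNbhd H q)ᶜ).Preconnected := not_not.1 fun h => hH ⟨q, h⟩
  exact rep.nestedIn_of_reachable (hconn ⟨p, hp⟩ ⟨w, hw⟩) hpq

lemma eq_or_adj_of_enclosesNonNeighbor (rep : IsFrameRepresentation H F)
    (hH : ¬ HasFullStarCutset H) {q q' : W} (hq : EnclosesNonNeighbor H F q)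
    (hq' : EnclosesNonNeighbor H F q') : q = q' ∨ H.Adj q q' := by
  by_contra! h
  have h' : q' ∉ closedNbhd H q := by simp [mem_closedNbhd, Ne.symm h.1, h.2]
  have h'' : q ∉ closedNbhd H q' := by simp [mem_closedNbhd, h.1, H.adj_comm, h.2]
  exact (rep.nestedIn_of_enclosesNonNeighbor hH hq h').asymm
    (rep.nestedIn_of_enclosesNonNeighbor hH hq' h'')

lemma enclosesNonNeighbor_of_adj_of_adj (rep : IsFrameRepresentation H F) {s a b : W}
    (ha : H.Adj s a) (hb : H.Adj s b) (hab : a ≠ b) (hnab : ¬ H.Adj a b)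
    (hxa : (F a).x1 ≤ (F s).x1) (hxb : (F b).x1 ≤ (F s).x1) :
    EnclosesNonNeighbor H F a ∨ EnclosesNonNeighbor H F b := by
  rcases Box.nestedIn_or_nestedIn_of_crosses (rep.crosses_of_adj_of_x1_le ha.symm hxa)
      (rep.crosses_of_adj_of_x1_le hb.symm hxb) (rep.disjoint_frame_of_not_adj hab hnab) with
    h | h
  · exact Or.inr ⟨a, by simp [mem_closedNbhd, hab, H.adj_comm, hnab], h⟩
  · exact Or.inl ⟨b, by simp [mem_closedNbhd, Ne.symm hab, hnab], h⟩

end IsFrameRepresentation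

namespace SimpleGraph

variable {V : Type} {G : SimpleGraph V} {s : Set V} {u v w : V}

lemma toMultigraph_m_of_adj (h : G.Adj u v) : G.toMultigraph.m u v = 1 := by
  simp [toMultigraph, h]

lemma adj_of_fin_toMultigraph_m (i : Fin (G.toMultigraph.m u v)) : G.Adj u v := by
  by_contra h
  have := i.2
  simp [toMultigraph, h] at this

def ReachableIn (G : SimpleGraph V) (s : Set V) (u v : V) : Prop :=
  ∃ p : G.Walk u v, ∀ x ∈ p.support, x ∈ s

namespace ReachableIn

lemma refl (hu : u ∈ s) : G.ReachableIn s u u :=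
  ⟨.nil, by simpa using hu⟩

lemma symm (h : G.ReachableIn s u v) : G.ReachableIn s v u := by
  obtain ⟨p, hp⟩ := h
  exact ⟨p.reverse, by simpa using hp⟩

lemma trans (h : G.ReachableIn s u v) (h' : G.ReachableIn s v w) : G.ReachableIn s u w := by
  obtain ⟨p, hp⟩ := h
  obtain ⟨q, hq⟩ := h'
  exact ⟨p.append q, fun x hx => (Walk.mem_support_append_iff p q).1 hx |>.elim (hp x) (hq x)⟩

lemma mem_right (h : G.ReachableIn s u v) : v ∈ s :=
  h.elim fun p hp => hp v p.end_mem_support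

lemma reachable_induce (h : G.ReachableIn s u v) (hu : u ∈ s) (hv : v ∈ s) :
    (G.induce s).Reachable ⟨u, hu⟩ ⟨v, hv⟩ := by
  obtain ⟨p, hp⟩ := h
  exact ⟨p.induce s hp⟩

end ReachableIn

namespace Walk

lemma reachableIn_getVert_start (p : G.Walk u v) {j : ℕ} (h : ∀ i ≤ j, p.getVert i ∈ s) :
    G.ReachableIn s (p.getVert j) u := by
  refine ⟨(p.take j).reverse, fun x hx => ?_⟩
  rw [support_reverse, List.mem_reverse] at hx
  obtain ⟨n, rfl, -⟩ := mem_support_iff_exists_getVert.1 hx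
  rw [take_getVert]
  exact h _ (min_le_left _ _)

lemma reachableIn_getVert_end (p : G.Walk u v) {j : ℕ} (hj : j ≤ p.length)
    (h : ∀ i, j ≤ i → i ≤ p.length → p.getVert i ∈ s) : G.ReachableIn s (p.getVert j) v := by
  refine ⟨p.drop j, fun x hx => ?_⟩
  obtain ⟨n, rfl, hn⟩ := mem_support_iff_exists_getVert.1 hx
  rw [drop_length] at hn
  rw [drop_getVert]
  exact h _ (Nat.le_add_right _ _) (by omega)

lemma getVert_mem_walkInterior {p : G.Walk u v} (hp : p.IsPath) {i : ℕ} (h0 : 0 < i)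
    (hi : i < p.length) : p.getVert i ∈ walkInterior p := by
  refine ⟨p.getVert_mem_support i, fun h => ?_, fun h => ?_⟩
  · exact h0.ne' (hp.getVert_injOn (by simp; omega) (by simp) (h.trans p.getVert_zero.symm))
  · exact hi.ne (hp.getVert_injOn (by simp; omega) (by simp) (h.trans p.getVert_length.symm))

lemma exists_getVert_eq_of_mem_walkInterior {p : G.Walk u v} {x : V}
    (hx : x ∈ walkInterior p) : ∃ i, 0 < i ∧ i < p.length ∧ p.getVert i = x := by
  obtain ⟨hx, hxu, hxv⟩ := hx
  obtain ⟨i, rfl, hi⟩ := mem_support_iff_exists_getVert.1 hx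
  refine ⟨i, Nat.pos_of_ne_zero fun h => hxu (h ▸ p.getVert_zero),
    lt_of_le_of_ne hi fun h => hxv (h ▸ p.getVert_length), rfl⟩

lemma IsPath.succ_eq_or_eq_succ_of_mem_edges {p : G.Walk u v} (hp : p.IsPath) {i j : ℕ}
    (hi : i ≤ p.length) (hj : j ≤ p.length) (h : s(p.getVert i, p.getVert j) ∈ p.edges) :
    i + 1 = j ∨ j + 1 = i := by
  obtain ⟨k, hk, he⟩ := p.mk_mem_edges_iff_exists.1 h
  have inj := hp.getVert_injOn
  rcases Sym2.eq_iff.1 he with ⟨h1, h2⟩ | ⟨h1, h2⟩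
  · have := inj (by simp; omega) (by simpa using hi) h1
    have := inj (by simp; omega) (by simpa using hj) h2
    omega
  · have := inj (by simp; omega) (by simpa using hj) h1
    have := inj (by simp; omega) (by simpa using hi) h2
    omega

end Walk

end SimpleGraph

namespace MultiSubdivision

open SimpleGraph

variable {V W : Type} {G : SimpleGraph V} {H : SimpleGraph W}
  (S : MultiSubdivision G.toMultigraph H 1) {u v u' v' : V}

def edgePath (h : G.Adj u v) : H.Walk (S.f u) (S.f v) :=
  S.path u v ⟨0, by rw [toMultigraph_m_of_adj h]; exact one_pos⟩

lemma path_eq_edgePath (i : Fin (G.toMultigraph.m u v)) :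
    S.path u v i = S.edgePath (adj_of_fin_toMultigraph_m i) := by
  have : (i : ℕ) < 1 := lt_of_lt_of_eq i.2 (toMultigraph_m_of_adj (adj_of_fin_toMultigraph_m i))
  exact congrArg (S.path u v) (Fin.ext (by simp; omega))

lemma isPath_edgePath (h : G.Adj u v) : (S.edgePath h).IsPath := S.isPath u v _

lemma two_le_length_edgePath (h : G.Adj u v) : 2 ≤ (S.edgePath h).length := S.length_le u v _

lemma edgePath_symm (h : G.Adj u v) : S.edgePath h.symm = (S.edgePath h).reverse := by
  have := S.path_symm u v ⟨0, by rw [toMultigraph_m_of_adj h]; exact one_pos⟩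
  rwa [path_eq_edgePath] at this

lemma support_edgePath_symm (h : G.Adj u v) {x : W} :
    x ∈ (S.edgePath h.symm).support ↔ x ∈ (S.edgePath h).support := by
  rw [edgePath_symm, Walk.support_reverse, List.mem_reverse]

lemma f_notMem_walkInterior (h : G.Adj u v) (t : V) : S.f t ∉ walkInterior (S.edgePath h) :=
  S.interior_avoid u v _ t

lemma eq_f_or_mem_walkInterior (h : G.Adj u v) {x : W} (hx : x ∈ (S.edgePath h).support) :
    x = S.f u ∨ x = S.f v ∨ x ∈ walkInterior (S.edgePath h) := by
  by_cases hu : x = S.f u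
  · exact Or.inl hu
  by_cases hv : x = S.f v
  · exact Or.inr (Or.inl hv)
  exact Or.inr (Or.inr ⟨hx, hu, hv⟩)

lemma eq_or_eq_of_f_mem_support (h : G.Adj u v) {t : V} (ht : S.f t ∈ (S.edgePath h).support) :
    t = u ∨ t = v := by
  rcases S.eq_f_or_mem_walkInterior h ht with h' | h' | h'
  · exact Or.inl (S.f.injective h')
  · exact Or.inr (S.f.injective h')
  · exact absurd h' (S.f_notMem_walkInterior h t)

lemma eq_and_eq_or_of_mem_walkInterior (h : G.Adj u v) (h' : G.Adj u' v') {x : W}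
    (hx : x ∈ walkInterior (S.edgePath h)) (hx' : x ∈ walkInterior (S.edgePath h')) :
    (u = u' ∧ v = v') ∨ (u = v' ∧ v = u') := by
  rcases S.interior_disjoint u v _ u' v' _ ⟨x, hx, hx'⟩ with ⟨h1, h2, -⟩ | ⟨h1, h2, -⟩
  · exact Or.inl ⟨h1, h2⟩
  · exact Or.inr ⟨h1, h2⟩

lemma notMem_support_of_mem_walkInterior (h : G.Adj u v) (h' : G.Adj u' v') {x : W}
    (hx : x ∈ walkInterior (S.edgePath h)) (hne : ¬ ((u = u' ∧ v = v') ∨ (u = v' ∧ v = u'))) :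
    x ∉ (S.edgePath h').support := fun hx' => by
  rcases S.eq_f_or_mem_walkInterior h' hx' with rfl | rfl | hx'
  · exact S.f_notMem_walkInterior h u' hx
  · exact S.f_notMem_walkInterior h v' hx
  · exact hne (S.eq_and_eq_or_of_mem_walkInterior h h' hx hx')

lemma exists_eq_f_or_mem_walkInterior (x : W) :
    (∃ t, x = S.f t) ∨ ∃ u v, ∃ h : G.Adj u v, x ∈ walkInterior (S.edgePath h) := by
  rcases S.vertex_cover x with ⟨t, ht⟩ | ⟨u, v, i, hi⟩
  · exact Or.inl ⟨t, ht.symm⟩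
  · rw [path_eq_edgePath] at hi
    exact Or.inr ⟨u, v, _, hi⟩

lemma exists_mem_edges_of_adj {x y : W} (hxy : H.Adj x y) :
    ∃ u v, ∃ h : G.Adj u v, s(x, y) ∈ (S.edgePath h).edges := by
  obtain ⟨u, v, i, hi⟩ := S.edge_cover s(x, y) hxy
  rw [path_eq_edgePath] at hi
  exact ⟨u, v, _, hi⟩

lemma mem_edges_of_adj_of_mem_walkInterior (h : G.Adj u v) {x y : W}
    (hx : x ∈ walkInterior (S.edgePath h)) (hxy : H.Adj x y) : s(x, y) ∈ (S.edgePath h).edges := by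
  obtain ⟨u', v', h', he⟩ := S.exists_mem_edges_of_adj hxy
  have hx' : x ∈ walkInterior (S.edgePath h') := by
    rcases S.eq_f_or_mem_walkInterior h' ((S.edgePath h').fst_mem_support_of_mem_edges he) with
      rfl | rfl | hx'
    · exact absurd hx (S.f_notMem_walkInterior h u')
    · exact absurd hx (S.f_notMem_walkInterior h v')
    · exact hx'
  rcases S.eq_and_eq_or_of_mem_walkInterior h h' hx hx' with ⟨rfl, rfl⟩ | ⟨rfl, rfl⟩
  · exact he
  · rwa [show S.edgePath h' = (S.edgePath h).reverse from S.edgePath_symm h, Walk.edges_reverse,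
      List.mem_reverse] at he

lemma mem_support_of_adj_of_mem_walkInterior (h : G.Adj u v) {x y : W}
    (hx : x ∈ walkInterior (S.edgePath h)) (hxy : H.Adj x y) : y ∈ (S.edgePath h).support :=
  (S.edgePath h).snd_mem_support_of_mem_edges (S.mem_edges_of_adj_of_mem_walkInterior h hx hxy)

lemma not_adj_f (a b : V) : ¬ H.Adj (S.f a) (S.f b) := by
  intro hab
  obtain ⟨u, v, h, he⟩ := S.exists_mem_edges_of_adj hab
  have hP := S.isPath_edgePath h
  have hlen := S.two_le_length_edgePath h
  have key : s(S.f u, S.f v) ∈ (S.edgePath h).edges := by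
    have hne : a ≠ b := fun hab' => hab.ne (congrArg S.f hab')
    rcases S.eq_or_eq_of_f_mem_support h ((S.edgePath h).fst_mem_support_of_mem_edges he) with
      rfl | rfl <;>
    rcases S.eq_or_eq_of_f_mem_support h ((S.edgePath h).snd_mem_support_of_mem_edges he) with
      rfl | rfl
    all_goals first | exact absurd rfl hne | exact he | exact Sym2.eq_swap ▸ he
  have := hP.succ_eq_or_eq_succ_of_mem_edges (Nat.zero_le _) le_rfl
    (by rwa [Walk.getVert_zero, Walk.getVert_length])
  omega

/-- Each `S.edgePath h` is an induced path of `H`. -/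
lemma succ_eq_or_eq_succ_of_adj_getVert (h : G.Adj u v) {i j : ℕ}
    (hi : i ≤ (S.edgePath h).length) (hj : j ≤ (S.edgePath h).length)
    (hadj : H.Adj ((S.edgePath h).getVert i) ((S.edgePath h).getVert j)) :
    i + 1 = j ∨ j + 1 = i := by
  set P := S.edgePath h
  have hP := S.isPath_edgePath h
  have hf : ∀ k ≤ P.length, ¬ (0 < k ∧ k < P.length) → ∃ t, P.getVert k = S.f t :=
    fun k hk hk' => by
    rcases (by omega : k = 0 ∨ k = P.length) with rfl | rfl
    · exact ⟨u, P.getVert_zero⟩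
    · exact ⟨v, P.getVert_length⟩
  by_cases hi' : 0 < i ∧ i < P.length
  · exact hP.succ_eq_or_eq_succ_of_mem_edges hi hj
      (S.mem_edges_of_adj_of_mem_walkInterior h (P.getVert_mem_walkInterior hP hi'.1 hi'.2) hadj)
  by_cases hj' : 0 < j ∧ j < P.length
  · exact (hP.succ_eq_or_eq_succ_of_mem_edges hj hi (S.mem_edges_of_adj_of_mem_walkInterior h
      (P.getVert_mem_walkInterior hP hj'.1 hj'.2) hadj.symm)).symm
  obtain ⟨a, ha⟩ := hf i hi hi'
  obtain ⟨b, hb⟩ := hf j hj hj'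
  exact absurd (ha ▸ hb ▸ hadj) (S.not_adj_f a b)

lemma le_add_one_of_getVert_mem_closedNbhd (h : G.Adj u v) {i k : ℕ}
    (hi : i ≤ (S.edgePath h).length) (hk : k ≤ (S.edgePath h).length)
    (hik : (S.edgePath h).getVert i ∈ closedNbhd H ((S.edgePath h).getVert k)) :
    i ≤ k + 1 ∧ k ≤ i + 1 := by
  rcases mem_closedNbhd.1 hik with hik | hik
  · have := (S.isPath_edgePath h).getVert_injOn (by simpa using hi) (by simpa using hk) hik
    omega
  · have := S.succ_eq_or_eq_succ_of_adj_getVert h hk hi hik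
    omega

lemma not_adj_of_mem_walkInterior (h : G.Adj u v) {x y z : W}
    (hx : x ∈ walkInterior (S.edgePath h)) (hxy : H.Adj x y) (hxz : H.Adj x z) : ¬ H.Adj y z := by
  intro hyz
  obtain ⟨i, -, hi, rfl⟩ := Walk.exists_getVert_eq_of_mem_walkInterior hx
  obtain ⟨j, rfl, hj⟩ :=
    Walk.mem_support_iff_exists_getVert.1 (S.mem_support_of_adj_of_mem_walkInterior h hx hxy)
  obtain ⟨k, rfl, hk⟩ :=
    Walk.mem_support_iff_exists_getVert.1 (S.mem_support_of_adj_of_mem_walkInterior h hx hxz)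
  have := S.succ_eq_or_eq_succ_of_adj_getVert h hi.le hj hxy
  have := S.succ_eq_or_eq_succ_of_adj_getVert h hi.le hk hxz
  have := S.succ_eq_or_eq_succ_of_adj_getVert h hj hk hyz
  omega

lemma not_adj_of_adj_of_adj (S : MultiSubdivision G.toMultigraph H 1) {x y z : W}
    (hxy : H.Adj x y) (hxz : H.Adj x z) : ¬ H.Adj y z := by
  rcases S.exists_eq_f_or_mem_walkInterior x with ⟨a, rfl⟩ | ⟨u, v, h, hx⟩
  · rcases S.exists_eq_f_or_mem_walkInterior y with ⟨b, rfl⟩ | ⟨u, v, h, hy⟩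
    · exact absurd hxy (S.not_adj_f a b)
    · exact fun hyz => S.not_adj_of_mem_walkInterior h hy hxy.symm hyz hxz
  · exact S.not_adj_of_mem_walkInterior h hx hxy hxz

lemma eq_f_or_eq_f_of_adj_of_notMem_support (h : G.Adj u v) {m x : W}
    (hm : m ∉ (S.edgePath h).support) (hmx : H.Adj m x) (hx : x ∈ (S.edgePath h).support) :
    x = S.f u ∨ x = S.f v := by
  rcases S.eq_f_or_mem_walkInterior h hx with hx | hx | hx
  · exact Or.inl hx
  · exact Or.inr hx
  · exact absurd (S.mem_support_of_adj_of_mem_walkInterior h hx hmx.symm) hm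

lemma not_adj_f_and_adj_f_of_notMem_support (h : G.Adj u v) {m : W}
    (hm : m ∉ (S.edgePath h).support) : ¬ (H.Adj m (S.f u) ∧ H.Adj m (S.f v)) := by
  rintro ⟨hmu, hmv⟩
  rcases S.exists_eq_f_or_mem_walkInterior m with ⟨t, rfl⟩ | ⟨x, y, h', hm'⟩
  · exact S.not_adj_f t u hmu
  have hu := S.eq_or_eq_of_f_mem_support h' (S.mem_support_of_adj_of_mem_walkInterior h' hm' hmu)
  have hv := S.eq_or_eq_of_f_mem_support h' (S.mem_support_of_adj_of_mem_walkInterior h' hm' hmv)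
  have hm'' := hm'.1
  rcases hu with rfl | rfl <;> rcases hv with rfl | rfl
  · exact h.ne rfl
  · exact hm hm''
  · exact hm ((S.support_edgePath_symm h).1 hm'')
  · exact h.ne rfl

/-- On the path of `H` through `x`, the vertices of `N[m]` form a block of consecutive vertices
not containing `x`, so one of the two ends of that path can be reached from `x` along it. -/
lemma exists_reachableIn_f (m : W) {x : W} (hx : x ∉ closedNbhd H m) :
    ∃ t, H.ReachableIn (closedNbhd H m)ᶜ x (S.f t) := by
  rcases S.exists_eq_f_or_mem_walkInterior x with ⟨t, rfl⟩ | ⟨u, v, h, hxint⟩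
  · exact ⟨t, .refl hx⟩
  set P := S.edgePath h
  have hP := S.isPath_edgePath h
  obtain ⟨j, hj0, hjl, rfl⟩ := Walk.exists_getVert_eq_of_mem_walkInterior hxint
  suffices (∀ i ≤ j, P.getVert i ∉ closedNbhd H m) ∨
      (∀ i, j ≤ i → i ≤ P.length → P.getVert i ∉ closedNbhd H m) by
    rcases this with h | h
    · exact ⟨u, P.reachableIn_getVert_start h⟩
    · exact ⟨v, P.reachableIn_getVert_end hjl.le h⟩
  by_cases hm : m ∈ P.support
  · obtain ⟨k, rfl, hk⟩ := Walk.mem_support_iff_exists_getVert.1 hm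
    have hjk : j + 1 < k ∨ k + 1 < j := by
      by_contra! hjk
      apply hx
      rcases (by omega : j = k ∨ j + 1 = k ∨ k + 1 = j) with rfl | rfl | rfl
      · exact Or.inl rfl
      · exact Or.inr (P.adj_getVert_succ (by omega)).symm
      · exact Or.inr (P.adj_getVert_succ (by omega))
    have hclose : ∀ i ≤ P.length, P.getVert i ∈ closedNbhd H (P.getVert k) →
        i ≤ k + 1 ∧ k ≤ i + 1 := fun i hi => S.le_add_one_of_getVert_mem_closedNbhd h hi hk
    rcases hjk with hjk | hjk
    · exact Or.inl fun i hi hmem => by have := hclose i (by omega) hmem; omega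
    · exact Or.inr fun i hi hi' hmem => by have := hclose i hi' hmem; omega
  -- Otherwise only an end of `P` can lie in `N[m]`, and not both ends do.
  have hends : ∀ i ≤ P.length, P.getVert i ∈ closedNbhd H m →
      (i = 0 ∧ H.Adj m (S.f u)) ∨ (i = P.length ∧ H.Adj m (S.f v)) := fun i hi hmem => by
    rcases mem_closedNbhd.1 hmem with hmem | hmem
    · exact absurd (hmem ▸ P.getVert_mem_support i) hm
    have inj := fun k (hk : k ≤ P.length) (he : P.getVert i = P.getVert k) =>
      hP.getVert_injOn (by simpa using hi) (by simpa using hk) he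
    rcases S.eq_f_or_eq_f_of_adj_of_notMem_support h hm hmem (P.getVert_mem_support i) with
      he | he
    · exact Or.inl ⟨inj 0 (Nat.zero_le _) (he.trans P.getVert_zero.symm), he ▸ hmem⟩
    · exact Or.inr ⟨inj _ le_rfl (he.trans P.getVert_length.symm), he ▸ hmem⟩
  have hboth := S.not_adj_f_and_adj_f_of_notMem_support h hm
  by_cases hv : H.Adj m (S.f v)
  · refine Or.inl fun i hi hmem => ?_
    rcases hends i (by omega) hmem with ⟨-, hu⟩ | ⟨rfl, -⟩
    · exact hboth ⟨hu, hv⟩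
    · omega
  · refine Or.inr fun i hi hi' hmem => ?_
    rcases hends i hi' hmem with ⟨rfl, -⟩ | ⟨-, hv'⟩
    · omega
    · exact hv hv'

end MultiSubdivision

namespace MultiSubdivision

open SimpleGraph

variable {W : Type} {H : SimpleGraph W} (S : MultiSubdivision K4.toMultigraph H 1)

lemma reachableIn_f_f (m : W) {r r' : Fin 4} (hr : S.f r ∉ closedNbhd H m)
    (hr' : S.f r' ∉ closedNbhd H m) : H.ReachableIn (closedNbhd H m)ᶜ (S.f r) (S.f r') := by
  have direct : ∀ c d (h : c ≠ d), S.f c ∉ closedNbhd H m → S.f d ∉ closedNbhd H m →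
      m ∉ (S.edgePath h).support → H.ReachableIn (closedNbhd H m)ᶜ (S.f c) (S.f d) :=
    fun c d h hc hd hm => ⟨S.edgePath h, fun x hx hxm => by
      rcases mem_closedNbhd.1 hxm with rfl | hmx
      · exact hm hx
      · rcases S.eq_f_or_eq_f_of_adj_of_notMem_support h hm hmx hx with rfl | rfl
        exacts [hc hxm, hd hxm]⟩
  by_cases hrr : r = r'
  · subst hrr
    exact .refl hr
  by_cases hm : m ∉ (S.edgePath hrr).support
  · exact direct r r' hrr hr hr' hm
  -- `m` is inside the path from `S.f r` to `S.f r'`, so go round through a third branch vertex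
  have hmint : m ∈ walkInterior (S.edgePath hrr) := ⟨not_not.1 hm,
    fun h => hr (h ▸ mem_closedNbhd.2 (Or.inl rfl)),
    fun h => hr' (h ▸ mem_closedNbhd.2 (Or.inl rfl))⟩
  obtain ⟨g, hgr, hgr'⟩ : ∃ g, g ≠ r ∧ g ≠ r' :=
    (by decide : ∀ r r' : Fin 4, ∃ g, g ≠ r ∧ g ≠ r') r r'
  have hg : S.f g ∉ closedNbhd H m := by
    rintro (hgm | hmg)
    · exact S.f_notMem_walkInterior hrr g (hgm ▸ hmint)
    · rcases S.eq_or_eq_of_f_mem_support hrr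
        (S.mem_support_of_adj_of_mem_walkInterior hrr hmint hmg) with h | h
      exacts [hgr h, hgr' h]
  have hm₁ := S.notMem_support_of_mem_walkInterior hrr (Ne.symm hgr : r ≠ g) hmint (by tauto)
  have hm₂ := S.notMem_support_of_mem_walkInterior hrr (hgr' : g ≠ r') hmint (by tauto)
  exact (direct r g _ hr hg hm₁).trans (direct g r' _ hg hr' hm₂)

lemma not_hasFullStarCutset (S : MultiSubdivision K4.toMultigraph H 1) : ¬ HasFullStarCutset H := by
  rintro ⟨m, hm⟩
  refine hm fun ⟨x, hx⟩ ⟨y, hy⟩ => ?_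
  obtain ⟨r, hxr⟩ := S.exists_reachableIn_f m hx
  obtain ⟨r', hyr'⟩ := S.exists_reachableIn_f m hy
  exact ((hxr.trans (S.reachableIn_f_f m hxr.mem_right hyr'.mem_right)).trans
    hyr'.symm).reachable_induce hx hy

/-- The vertex set of the subdivided triangle of `K₄` opposite to the branch vertex `e`. -/
def oppositeCycle (e : Fin 4) : Set W :=
  {x | ∃ c d, ∃ h : c ≠ d, c ≠ e ∧ d ≠ e ∧ x ∈ (S.edgePath h).support}

lemma finite_oppositeCycle (e : Fin 4) : (S.oppositeCycle e).Finite := by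
  refine (Set.finite_iUnion fun c => Set.finite_iUnion fun d =>
    Set.finite_iUnion fun h : c ≠ d => List.finite_toSet (S.edgePath h).support).subset ?_
  rintro x ⟨c, d, h, -, -, hx⟩
  exact Set.mem_iUnion.2 ⟨c, Set.mem_iUnion.2 ⟨d, Set.mem_iUnion.2 ⟨h, hx⟩⟩⟩

lemma nonempty_oppositeCycle (e : Fin 4) : (S.oppositeCycle e).Nonempty := by
  obtain ⟨c, d, h, hc, hd⟩ : ∃ c d : Fin 4, c ≠ d ∧ c ≠ e ∧ d ≠ e :=
    (by decide : ∀ e : Fin 4, ∃ c d : Fin 4, c ≠ d ∧ c ≠ e ∧ d ≠ e) e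
  exact ⟨S.f c, c, d, h, hc, hd, (S.edgePath h).start_mem_support⟩

lemma exists_two_adj_f_mem_oppositeCycle {c e : Fin 4} (hc : c ≠ e) :
    ∃ a b, a ≠ b ∧ H.Adj (S.f c) a ∧ H.Adj (S.f c) b ∧
      a ∈ S.oppositeCycle e ∧ b ∈ S.oppositeCycle e := by
  obtain ⟨g, g', hgg', hgc, hg'c, hge, hg'e⟩ :
      ∃ g g' : Fin 4, g ≠ g' ∧ g ≠ c ∧ g' ≠ c ∧ g ≠ e ∧ g' ≠ e :=
    (by decide : ∀ c e : Fin 4, c ≠ e → ∃ g g' : Fin 4, g ≠ g' ∧ g ≠ c ∧ g' ≠ c ∧ g ≠ e ∧ g' ≠ e)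
      c e hc
  have second : ∀ (d : Fin 4) (h : c ≠ d), H.Adj (S.f c) ((S.edgePath h).getVert 1) ∧
      (S.edgePath h).getVert 1 ∈ walkInterior (S.edgePath h) := fun d h => by
    have hlen := S.two_le_length_edgePath h
    refine ⟨?_, (S.edgePath h).getVert_mem_walkInterior (S.isPath_edgePath h) one_pos (by omega)⟩
    simpa using (S.edgePath h).adj_getVert_succ (i := 0) (by omega)
  obtain ⟨ha, ha'⟩ := second g hgc.symm
  obtain ⟨hb, hb'⟩ := second g' hg'c.symm
  refine ⟨_, _, fun hab => ?_, ha, hb, ⟨c, g, hgc.symm, hc, hge, Walk.getVert_mem_support _ _⟩,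
    ⟨c, g', hg'c.symm, hc, hg'e, Walk.getVert_mem_support _ _⟩⟩
  rcases S.eq_and_eq_or_of_mem_walkInterior _ _ ha' (hab ▸ hb') with ⟨-, h⟩ | ⟨h, -⟩
  exacts [hgg' h, hg'c h.symm]

lemma exists_two_adj_mem_oppositeCycle {e : Fin 4} {x : W} (hx : x ∈ S.oppositeCycle e) :
    ∃ a b, a ≠ b ∧ H.Adj x a ∧ H.Adj x b ∧
      a ∈ S.oppositeCycle e ∧ b ∈ S.oppositeCycle e := by
  obtain ⟨c, d, h, hc, hd, hx⟩ := hx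
  rcases S.eq_f_or_mem_walkInterior h hx with rfl | rfl | hxint
  · exact S.exists_two_adj_f_mem_oppositeCycle hc
  · exact S.exists_two_adj_f_mem_oppositeCycle hd
  obtain ⟨k, hk0, hk, rfl⟩ := Walk.exists_getVert_eq_of_mem_walkInterior hxint
  have hne : (S.edgePath h).getVert (k - 1) ≠ (S.edgePath h).getVert (k + 1) := fun he => by
    have := (S.isPath_edgePath h).getVert_injOn (by simp; omega) (by simp; omega) he
    omega
  refine ⟨_, _, hne, ?_, (S.edgePath h).adj_getVert_succ hk, ⟨c, d, h, hc, hd,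
    Walk.getVert_mem_support _ _⟩, ⟨c, d, h, hc, hd, Walk.getVert_mem_support _ _⟩⟩
  simpa [Nat.sub_add_cancel hk0] using
    ((S.edgePath h).adj_getVert_succ (i := k - 1) (by omega)).symm

lemma notMem_oppositeCycle {u v : Fin 4} (h : u ≠ v) {x : W} (hx : x ∈ (S.edgePath h).support)
    (hxv : x ≠ S.f v) : x ∉ S.oppositeCycle u := by
  rintro ⟨c, d, h', hc, hd, hx'⟩
  rcases S.eq_f_or_mem_walkInterior h hx with rfl | rfl | hxint
  · rcases S.eq_or_eq_of_f_mem_support h' hx' with rfl | rfl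
    exacts [hc rfl, hd rfl]
  · exact hxv rfl
  · exact S.notMem_support_of_mem_walkInterior h h' hxint (by tauto) hx'

lemma exists_notMem_oppositeCycle (x : W) : ∃ e, x ∉ S.oppositeCycle e := by
  rcases S.exists_eq_f_or_mem_walkInterior x with ⟨t, rfl⟩ | ⟨u, v, h, hx⟩
  · refine ⟨t, fun ⟨c, d, h, hc, hd, ht⟩ => ?_⟩
    rcases S.eq_or_eq_of_f_mem_support h ht with rfl | rfl
    exacts [hc rfl, hd rfl]
  · exact ⟨u, S.notMem_oppositeCycle h hx.1 hx.2.2⟩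

lemma exists_notMem_oppositeCycle_of_adj {x y : W} (hxy : H.Adj x y) :
    ∃ e, x ∉ S.oppositeCycle e ∧ y ∉ S.oppositeCycle e := by
  obtain ⟨u, v, h, he⟩ := S.exists_mem_edges_of_adj hxy
  have hx := (S.edgePath h).fst_mem_support_of_mem_edges he
  have hy := (S.edgePath h).snd_mem_support_of_mem_edges he
  by_cases hv : x = S.f v ∨ y = S.f v
  · have hu : x ≠ S.f u ∧ y ≠ S.f u := by
      have huv : S.f u ≠ S.f v := S.f.injective.ne h
      rcases hv with rfl | rfl
      · exact ⟨huv.symm, by rintro rfl; exact S.not_adj_f v u hxy⟩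
      · exact ⟨by rintro rfl; exact S.not_adj_f u v hxy, huv.symm⟩
    exact ⟨v, S.notMem_oppositeCycle h.symm ((S.support_edgePath_symm h).2 hx) hu.1,
      S.notMem_oppositeCycle h.symm ((S.support_edgePath_symm h).2 hy) hu.2⟩
  · rw [not_or] at hv
    exact ⟨u, S.notMem_oppositeCycle h hx hv.1, S.notMem_oppositeCycle h hy hv.2⟩

lemma exists_mem_oppositeCycle_enclosesNonNeighbor {F : W → Box}
    (rep : IsFrameRepresentation H F) (e : Fin 4) :
    ∃ q ∈ S.oppositeCycle e, EnclosesNonNeighbor H F q := by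
  obtain ⟨s, hs, hmax⟩ := Set.exists_max_image (S.oppositeCycle e) (fun w => (F w).x1)
    (S.finite_oppositeCycle e) (S.nonempty_oppositeCycle e)
  obtain ⟨a, b, hab, ha, hb, haC, hbC⟩ := S.exists_two_adj_mem_oppositeCycle hs
  rcases rep.enclosesNonNeighbor_of_adj_of_adj ha hb hab (S.not_adj_of_adj_of_adj ha hb)
    (hmax a haC) (hmax b hbC) with h | h
  exacts [⟨a, haC, h⟩, ⟨b, hbC, h⟩]

end MultiSubdivision

theorem no_ge_one_subdivision_K4_isRestrictedFrameGraph_general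
    {W : Type} (H : SimpleGraph W)
    (hsub : IsSubdivisionGE (⊤ : SimpleGraph (Fin 4)).toMultigraph 1 H) :
    ¬ IsRestrictedFrameGraph H := by
  rintro ⟨F, rep⟩
  obtain ⟨S⟩ := hsub
  have hH := S.not_hasFullStarCutset
  have hne : ∀ {q q' : W} {e : Fin 4}, q ∉ S.oppositeCycle e → q' ∈ S.oppositeCycle e → q ≠ q' :=
    fun hq hq' h => hq (h ▸ hq')
  obtain ⟨q₀, -, hq₀⟩ := S.exists_mem_oppositeCycle_enclosesNonNeighbor rep 0
  obtain ⟨e₁, he₁⟩ := S.exists_notMem_oppositeCycle q₀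
  obtain ⟨q₁, hq₁C, hq₁⟩ := S.exists_mem_oppositeCycle_enclosesNonNeighbor rep e₁
  have h₀₁ := (rep.eq_or_adj_of_enclosesNonNeighbor hH hq₀ hq₁).resolve_left (hne he₁ hq₁C)
  obtain ⟨e₂, he₂₀, he₂₁⟩ := S.exists_notMem_oppositeCycle_of_adj h₀₁
  obtain ⟨q₂, hq₂C, hq₂⟩ := S.exists_mem_oppositeCycle_enclosesNonNeighbor rep e₂
  have h₀₂ := (rep.eq_or_adj_of_enclosesNonNeighbor hH hq₀ hq₂).resolve_left (hne he₂₀ hq₂C)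
  have h₁₂ := (rep.eq_or_adj_of_enclosesNonNeighbor hH hq₁ hq₂).resolve_left (hne he₂₁ hq₂C)
  exact S.not_adj_of_adj_of_adj h₀₁ h₀₂ h₁₂

/-- No `≥1`-subdivision of `K₄` is a restricted frame graph:
no graph obtained from `K₄` by subdividing every edge at least once is a restricted
frame graph. -/
theorem no_ge_one_subdivision_K4_isRestrictedFrameGraph
    {W : Type} [Fintype W] (H : SimpleGraph W)
    (hsub : IsSubdivisionGE (⊤ : SimpleGraph (Fin 4)).toMultigraph 1 H) :
    ¬ IsRestrictedFrameGraph H :=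
  no_ge_one_subdivision_K4_isRestrictedFrameGraph_general H hsub
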